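/- arXiv:2603.15463 — 5 statements merged into one kernel-verified Lean document; each statement's English description precedes it below -/
import Mathlib

section
/- Let H = ⋀_{i=1}^{h} (ℓ_i ∨ ℓ_{h+i}) be a matching formula with h clauses and let F be a 2-CNF. If θ(H,F) ≥ 2/3, then the number of assignments α ∈ sat(H) such that F ∧ α is satisfiable and such that the number of indices i ∈ {1,…,h} with α(ℓ_i) = α(ℓ_{h+i}) = 1 is at most h/2, is at least 3^h / 6. -/
open Finset Filter

/-- A 2-clause over variables `x_0, …, x_{n-1}`: an (ordered) pair of literals on two
distinct variables, the first literal having the smaller variable index.  A literal is a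
pair (variable, polarity).  There are `4 * (n choose 2)` such clauses. -/
abbrev Clause (n : ℕ) := {p : (Fin n × Bool) × (Fin n × Bool) // p.1.1 < p.2.1}

/-- Value of a literal under a total assignment. -/
def litVal {n : ℕ} (σ : Fin n → Bool) (ℓ : Fin n × Bool) : Bool :=
  if ℓ.2 then σ ℓ.1 else !(σ ℓ.1)

/-- A total assignment satisfies a 2-clause. -/
def clauseSat {n : ℕ} (σ : Fin n → Bool) (C : Clause n) : Prop :=
  litVal σ C.val.1 = true ∨ litVal σ C.val.2 = true

/-- Probability of the event `P` under the uniform distribution on the finite type `Ω`. -/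
noncomputable def pr (Ω : Type*) [Fintype Ω] (P : Ω → Prop) : ℝ :=
  (Nat.card {ω : Ω // P ω} : ℝ) / (Fintype.card Ω : ℝ)

/-- A partial assignment to the variables `x_0, …, x_{n-1}`. -/
abbrev PAssign (n : ℕ) := Fin n → Option Bool

/-- The (two-element) set of variables of a 2-clause. -/
def vars {n : ℕ} (C : Clause n) : Finset (Fin n) := {C.val.1.1, C.val.2.1}

/-- The set of variables assigned by a partial assignment. -/
def support {n : ℕ} (α : PAssign n) : Finset (Fin n) := univ.filter (fun x => (α x).isSome)

/-- Value of a literal under a partial assignment. -/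
def plitVal {n : ℕ} (α : PAssign n) (ℓ : Fin n × Bool) : Option Bool :=
  (α ℓ.1).map (fun b => if ℓ.2 then b else !b)

/-- A partial assignment satisfies a 2-clause. -/
def pClauseSat {n : ℕ} (α : PAssign n) (C : Clause n) : Prop :=
  plitVal α C.val.1 = some true ∨ plitVal α C.val.2 = some true

/-- The set of variables of a 2-CNF (a multiset of clauses). -/
def mvars {n : ℕ} (F : Multiset (Clause n)) : Finset (Fin n) := F.toFinset.biUnion vars

/-- `α ∈ sat(H)`: `α` is an assignment to exactly the variables of `H` satisfying `H`. -/
def satAssign {n : ℕ} (H : Multiset (Clause n)) (α : PAssign n) : Prop :=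
  support α = mvars H ∧ ∀ C ∈ H, pClauseSat α C

/-- `F ∧ α` is satisfiable: `α` extends to a total assignment satisfying `F`. -/
def extendable {n : ℕ} (F : Multiset (Clause n)) (α : PAssign n) : Prop :=
  ∃ σ : Fin n → Bool, (∀ x b, α x = some b → σ x = b) ∧ ∀ C ∈ F, clauseSat σ C

/-- `θ(H,F)`: the fraction of `α ∈ sat(H)` such that `F ∧ α` is satisfiable
(`1` if `H` is unsatisfiable). -/
noncomputable def theta {n : ℕ} (H F : Multiset (Clause n)) : ℝ :=
  if Nat.card {α : PAssign n // satAssign H α} = 0 then 1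
  else (Nat.card {α : PAssign n // satAssign H α ∧ extendable F α} : ℝ) /
    (Nat.card {α : PAssign n // satAssign H α} : ℝ)

/-- Partial assignments assigning exactly `k` variables (`𝓕₁(n,k)` sample space). -/
abbrev PAk (n k : ℕ) := {α : PAssign n // (support α).card = k}

namespace MGAAux

abbrev V := {p : Bool × Bool // p.1 = true ∨ p.2 = true}

def TT : V := ⟨(true, true), Or.inl rfl⟩
def TF : V := ⟨(true, false), Or.inl rfl⟩
def FT : V := ⟨(false, true), Or.inr rfl⟩

def sig : V → V
  | ⟨(true, b), _⟩ => ⟨(true, !b), Or.inl rfl⟩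
  | ⟨(false, b), hb⟩ => ⟨(false, b), hb⟩

lemma sig_invol : ∀ v : V, sig (sig v) = v := by decide
lemma sig_eq_TT : ∀ v : V, sig v = TT ↔ v = TF := by decide
lemma v_cases : ∀ v : V, v = TT ∨ v = TF ∨ v = FT := by decide
lemma cardV : Fintype.card V = 3 := by decide

variable {n h : ℕ}

lemma mem_vars {C : Clause n} {x : Fin n} :
    x ∈ vars C ↔ x = C.val.1.1 ∨ x = C.val.2.1 := by simp [vars]

section
variable (L : Fin h → Clause n)

lemma mem_H {C : Clause n} : C ∈ (↑(List.ofFn L) : Multiset (Clause n)) ↔ ∃ i, L i = C := by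
  simp [List.mem_ofFn, Set.mem_range]

lemma mem_mvars {x : Fin n} :
    x ∈ mvars (↑(List.ofFn L) : Multiset (Clause n)) ↔ ∃ i, x ∈ vars (L i) := by
  simp only [mvars, Finset.mem_biUnion, Multiset.mem_toFinset, Multiset.mem_coe,
    List.mem_ofFn, Set.mem_range]
  constructor
  · rintro ⟨C, ⟨i, rfl⟩, hx⟩; exact ⟨i, hx⟩
  · rintro ⟨i, hx⟩; exact ⟨L i, ⟨i, rfl⟩, hx⟩

noncomputable def Phi (f : Fin h → V) : PAssign n := fun x =>
  if hx : ∃ i, x ∈ vars (L i) then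
    if x = (L hx.choose).val.1.1 then some ((L hx.choose).val.1.2 == (f hx.choose).val.1)
    else some ((L hx.choose).val.2.2 == (f hx.choose).val.2)
  else none

lemma uniq (hm : ∀ i j, i ≠ j → Disjoint (vars (L i)) (vars (L j))) {x : Fin n} {i j : Fin h} (hi : x ∈ vars (L i)) (hj : x ∈ vars (L j)) : i = j := by
  by_contra hne
  exact (Finset.disjoint_left.mp (hm i j hne) hi) hj

lemma Phi_eval1 (hm : ∀ i j, i ≠ j → Disjoint (vars (L i)) (vars (L j))) (f : Fin h → V) (i : Fin h) :
    Phi L f ((L i).val.1.1) = some ((L i).val.1.2 == (f i).val.1) := by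
  have hx : ∃ k, (L i).val.1.1 ∈ vars (L k) := ⟨i, by simp [mem_vars]⟩
  have he : hx.choose = i := uniq L hm hx.choose_spec (by simp [mem_vars])
  simp only [Phi]
  rw [dif_pos hx, he, if_pos rfl]

lemma Phi_eval2 (hm : ∀ i j, i ≠ j → Disjoint (vars (L i)) (vars (L j))) (f : Fin h → V) (i : Fin h) :
    Phi L f ((L i).val.2.1) = some ((L i).val.2.2 == (f i).val.2) := by
  have hx : ∃ k, (L i).val.2.1 ∈ vars (L k) := ⟨i, by simp [mem_vars]⟩
  have he : hx.choose = i := uniq L hm hx.choose_spec (by simp [mem_vars])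
  simp only [Phi]
  rw [dif_pos hx, he, if_neg (Ne.symm (ne_of_lt (L i).prop))]

lemma boolAux1 : ∀ s b : Bool, (if s = true then (s == b) else !(s == b)) = b := by decide
lemma boolAux2 : ∀ s a : Bool, (s == if s = true then a else !a) = a := by decide

lemma plit_Phi1 (hm : ∀ i j, i ≠ j → Disjoint (vars (L i)) (vars (L j))) (f : Fin h → V) (i : Fin h) :
    plitVal (Phi L f) (L i).val.1 = some ((f i).val.1) := by
  rw [plitVal, Phi_eval1 L hm f i, Option.map_some]
  exact congrArg some (boolAux1 _ _)

lemma plit_Phi2 (hm : ∀ i j, i ≠ j → Disjoint (vars (L i)) (vars (L j))) (f : Fin h → V) (i : Fin h) :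
    plitVal (Phi L f) (L i).val.2 = some ((f i).val.2) := by
  rw [plitVal, Phi_eval2 L hm f i, Option.map_some]
  exact congrArg some (boolAux1 _ _)

lemma sat_Phi (hm : ∀ i j, i ≠ j → Disjoint (vars (L i)) (vars (L j))) (f : Fin h → V) : satAssign (↑(List.ofFn L) : Multiset (Clause n)) (Phi L f) := by
  constructor
  · ext x
    rw [support, Finset.mem_filter]
    simp only [Finset.mem_univ, true_and]
    rw [mem_mvars L]
    constructor
    · intro hs
      by_contra hno
      simp only [Phi] at hs
      rw [dif_neg hno] at hs
      simp at hs
    · intro hx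
      simp only [Phi]
      rw [dif_pos hx]
      split <;> simp
  · intro C hC
    obtain ⟨i, rfl⟩ := (mem_H L).mp hC
    rcases (f i).prop with hp | hp
    · left; rw [plit_Phi1 L hm, hp]
    · right; rw [plit_Phi2 L hm, hp]

lemma Phi_inj (hm : ∀ i j, i ≠ j → Disjoint (vars (L i)) (vars (L j))) : Function.Injective (Phi L) := by
  intro f g hfg
  funext i
  have e1 : some ((f i).val.1) = some ((g i).val.1) := by
    rw [← plit_Phi1 L hm f i, ← plit_Phi1 L hm g i, hfg]
  have e2 : some ((f i).val.2) = some ((g i).val.2) := by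
    rw [← plit_Phi2 L hm f i, ← plit_Phi2 L hm g i, hfg]
  exact Subtype.ext (Prod.ext (Option.some.inj e1) (Option.some.inj e2))

lemma Phi_surj (hm : ∀ i j, i ≠ j → Disjoint (vars (L i)) (vars (L j))) {α : PAssign n} (hα : satAssign (↑(List.ofFn L) : Multiset (Clause n)) α) :
    ∃ f, Phi L f = α := by
  have hsat : ∀ i, pClauseSat α (L i) := fun i => hα.2 (L i) ((mem_H L).mpr ⟨i, rfl⟩)
  refine ⟨fun i => ⟨((plitVal α (L i).val.1).getD false, (plitVal α (L i).val.2).getD false), ?_⟩, ?_⟩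
  · rcases hsat i with hc | hc
    · left; rw [hc]; rfl
    · right; rw [hc]; rfl
  · funext x
    by_cases hx : ∃ i, x ∈ vars (L i)
    · obtain ⟨i, hxi⟩ := hx
      have hxm : x ∈ support α := by
        rw [hα.1, mem_mvars L]; exact ⟨i, hxi⟩
      have hxs : (α x).isSome := by simpa [support] using hxm
      obtain ⟨a, ha⟩ := Option.isSome_iff_exists.mp hxs
      have hplit1 : plitVal α (L i).val.1 =
          (α ((L i).val.1.1)).map (fun b => if (L i).val.1.2 then b else !b) := rfl
      rcases mem_vars.mp hxi with h1 | h1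
      · subst h1
        rw [Phi_eval1 L hm, ha]
        have hpv : plitVal α (L i).val.1 = some (if (L i).val.1.2 = true then a else !a) := by
          rw [plitVal, ha, Option.map_some]
        simp only [hpv, Option.getD_some]
        exact congrArg some (boolAux2 _ _)
      · subst h1
        rw [Phi_eval2 L hm, ha]
        have hpv : plitVal α (L i).val.2 = some (if (L i).val.2.2 = true then a else !a) := by
          rw [plitVal, ha, Option.map_some]
        simp only [hpv, Option.getD_some]
        exact congrArg some (boolAux2 _ _)
    · simp only [Phi]
      rw [dif_neg hx]
      have hxm : x ∉ support α := by
        rw [hα.1, mem_mvars L]; exact hx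
      have : ¬ (α x).isSome := by simpa [support] using hxm
      exact (Option.not_isSome_iff_eq_none.mp this).symm

lemma card_sat (hm : ∀ i j, i ≠ j → Disjoint (vars (L i)) (vars (L j))) : Nat.card {α : PAssign n // satAssign (↑(List.ofFn L) : Multiset (Clause n)) α}
    = 3 ^ h := by
  have hbij : Function.Bijective
      (fun f : Fin h → V =>
        (⟨Phi L f, sat_Phi L hm f⟩ :
          {α : PAssign n // satAssign (↑(List.ofFn L) : Multiset (Clause n)) α})) := by
    constructor
    · intro f g hfg
      exact Phi_inj L hm (congrArg Subtype.val hfg)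
    · rintro ⟨α, hα⟩
      obtain ⟨f, hf⟩ := Phi_surj L hm hα
      exact ⟨f, Subtype.ext hf⟩
  rw [← Nat.card_eq_of_bijective _ hbij, Nat.card_eq_fintype_card, Fintype.card_fun, cardV,
    Fintype.card_fin]

lemma filter_Phi (hm : ∀ i j, i ≠ j → Disjoint (vars (L i)) (vars (L j))) (f : Fin h → V) :
    (univ.filter fun i : Fin h =>
        plitVal (Phi L f) (L i).val.1 = some true ∧ plitVal (Phi L f) (L i).val.2 = some true)
      = univ.filter (fun i => f i = TT) := by
  apply Finset.filter_congr
  intro i _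
  rw [plit_Phi1 L hm, plit_Phi2 L hm]
  simp only [Option.some.injEq]
  constructor
  · rintro ⟨h1, h2⟩
    exact Subtype.ext (Prod.ext h1 h2)
  · intro hv
    rw [hv]
    exact ⟨rfl, rfl⟩

end

section counting

variable {h : ℕ}

def cnt (f : Fin h → V) (v : V) : ℕ := (univ.filter fun i => f i = v).card

lemma cnt_sig (f : Fin h → V) : cnt (fun i => sig (f i)) TT = cnt f TF := by
  unfold cnt
  congr 1
  ext i
  simp [sig_eq_TT]

lemma cnt_sum (f : Fin h → V) : cnt f TT + cnt f TF + cnt f FT = h := by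
  classical
  have h1 : (univ.filter fun i => f i = TT).card
      + (univ.filter fun i => ¬ f i = TT).card = h := by
    rw [Finset.card_filter_add_card_filter_not, Finset.card_univ, Fintype.card_fin]
  have h2 : (univ.filter fun i : Fin h => ¬ f i = TT)
      = (univ.filter fun i => f i = TF) ∪ (univ.filter fun i => f i = FT) := by
    ext i
    simp only [mem_filter, mem_union, mem_univ, true_and]
    constructor
    · intro hne
      rcases v_cases (f i) with hv | hv | hv
      · exact absurd hv hne
      · exact Or.inl hv
      · exact Or.inr hv
    · rintro (hv | hv) <;> rw [hv] <;> decide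
  have h3 : Disjoint (univ.filter fun i : Fin h => f i = TF)
      (univ.filter fun i => f i = FT) := by
    rw [Finset.disjoint_left]
    intro i hi hj
    simp only [mem_filter] at hi hj
    rw [hi.2] at hj
    exact absurd hj.2 (by decide)
  rw [h2, Finset.card_union_of_disjoint h3] at h1
  unfold cnt
  omega

lemma bad_card : 2 * Nat.card {f : Fin h → V // (h : ℝ)/2 < (cnt f TT : ℝ)} ≤ 3 ^ h := by
  classical
  have key : ∀ f : Fin h → V, (h : ℝ)/2 < (cnt f TT : ℝ) →
      ¬ ((h : ℝ)/2 < (cnt (fun i => sig (f i)) TT : ℝ)) := by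
    intro f hf
    rw [cnt_sig, not_lt]
    have hs := cnt_sum f
    have hcast : (cnt f TT : ℝ) + cnt f TF + cnt f FT = h := by exact_mod_cast hs
    have h0 : (0 : ℝ) ≤ cnt f FT := by positivity
    linarith
  have hinj : Function.Injective
      (fun f : {f : Fin h → V // (h : ℝ)/2 < (cnt f TT : ℝ)} =>
        (⟨fun i => sig (f.1 i), key _ f.2⟩ :
          {f : Fin h → V // ¬ ((h : ℝ)/2 < (cnt f TT : ℝ))})) := by
    intro f g hfg
    apply Subtype.ext
    funext i
    have h1 : sig (f.1 i) = sig (g.1 i) := congrFun (congrArg Subtype.val hfg) i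
    have h2 := congrArg sig h1
    rwa [sig_invol, sig_invol] at h2
  have hle := Nat.card_le_card_of_injective _ hinj
  have hsum : Nat.card {f : Fin h → V // (h : ℝ)/2 < (cnt f TT : ℝ)}
      + Nat.card {f : Fin h → V // ¬ ((h : ℝ)/2 < (cnt f TT : ℝ))} = 3 ^ h := by
    have hc := Set.ncard_add_ncard_compl {f : Fin h → V | (h : ℝ)/2 < (cnt f TT : ℝ)}
    rw [Set.compl_setOf] at hc
    have e3 : Nat.card (Fin h → V) = 3 ^ h := by
      rw [Nat.card_eq_fintype_card, Fintype.card_fun, cardV, Fintype.card_fin]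
    have hA : Nat.card {f : Fin h → V // (h : ℝ)/2 < (cnt f TT : ℝ)}
        = ({f : Fin h → V | (h : ℝ)/2 < (cnt f TT : ℝ)}).ncard :=
      Nat.card_coe_set_eq _
    have hB : Nat.card {f : Fin h → V // ¬ ((h : ℝ)/2 < (cnt f TT : ℝ))}
        = ({f : Fin h → V | ¬ ((h : ℝ)/2 < (cnt f TT : ℝ))}).ncard :=
      Nat.card_coe_set_eq _
    rw [hA, hB, hc, e3]
  omega

end counting

end MGAAux


set_option maxHeartbeats 1600000

/-- If `H = ⋀_{i=1}^h (ℓ_i ∨ ℓ_{h+i})` is a matching formula and `F` a 2-CNF with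
`θ(H,F) ≥ 2/3`, then at least `3^h/6` assignments `α ∈ sat(H)` are such that `F ∧ α` is
satisfiable and `α(ℓ_i) = α(ℓ_{h+i}) = 1` holds for at most `h/2` indices `i`. -/
theorem many_good_assignments (n h : ℕ) (L : Fin h → Clause n)
    (hmatch : ∀ i j, i ≠ j → Disjoint (vars (L i)) (vars (L j)))
    (F : Multiset (Clause n))
    (hθ : 2 / 3 ≤ theta (↑(List.ofFn L) : Multiset (Clause n)) F) :
    (3 : ℝ) ^ h / 6 ≤
      (Nat.card {α : PAssign n //
        satAssign (↑(List.ofFn L) : Multiset (Clause n)) α ∧ extendable F α ∧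
        ((univ.filter (fun i : Fin h =>
            plitVal α (L i).val.1 = some true ∧
            plitVal α (L i).val.2 = some true)).card : ℝ) ≤ (h : ℝ) / 2} : ℝ) := by
  classical
  set H := (↑(List.ofFn L) : Multiset (Clause n)) with hH
  set badP : PAssign n → Prop := fun α =>
    (h : ℝ) / 2 < ((univ.filter (fun i : Fin h =>
      plitVal α (L i).val.1 = some true ∧
      plitVal α (L i).val.2 = some true)).card : ℝ) with hbadP
  have hN : Nat.card {α : PAssign n // satAssign H α} = 3 ^ h := MGAAux.card_sat L hmatch
  have hNne : Nat.card {α : PAssign n // satAssign H α} ≠ 0 := by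
    rw [hN]; positivity
  rw [theta, if_neg hNne, hN] at hθ
  have h3pos : (0 : ℝ) < (3 : ℝ) ^ h := by positivity
  have hcast : ((3 ^ h : ℕ) : ℝ) = (3 : ℝ) ^ h := by push_cast; ring
  rw [hcast] at hθ
  have hAge : 2 / 3 * (3 : ℝ) ^ h ≤
      (Nat.card {α : PAssign n // satAssign H α ∧ extendable F α} : ℝ) :=
    (le_div_iff₀ h3pos).mp hθ
  -- bad-assignment count
  have hfilt : ∀ f : Fin h → MGAAux.V,
      ((univ.filter (fun i : Fin h =>
        plitVal (MGAAux.Phi L f) (L i).val.1 = some true ∧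
        plitVal (MGAAux.Phi L f) (L i).val.2 = some true)).card : ℕ)
        = MGAAux.cnt f MGAAux.TT := by
    intro f
    rw [MGAAux.filter_Phi L hmatch]
    rfl
  have hBbij : Nat.card {f : Fin h → MGAAux.V //
        (h : ℝ) / 2 < (MGAAux.cnt f MGAAux.TT : ℝ)}
      = Nat.card {α : PAssign n // satAssign H α ∧ badP α} := by
    apply Nat.card_eq_of_bijective
      (fun f => (⟨MGAAux.Phi L f.1, MGAAux.sat_Phi L hmatch f.1, by
        show (h : ℝ) / 2 < ((univ.filter (fun i : Fin h =>
          plitVal (MGAAux.Phi L f.1) (L i).val.1 = some true ∧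
          plitVal (MGAAux.Phi L f.1) (L i).val.2 = some true)).card : ℝ)
        rw [hfilt f.1]
        exact f.2⟩ : {α : PAssign n // satAssign H α ∧ badP α}))
    constructor
    · intro f g hfg
      exact Subtype.ext (MGAAux.Phi_inj L hmatch (congrArg Subtype.val hfg))
    · rintro ⟨α, hαs, hαb⟩
      obtain ⟨f, hf⟩ := MGAAux.Phi_surj L hmatch hαs
      refine ⟨⟨f, ?_⟩, Subtype.ext hf⟩
      have hb : (h : ℝ) / 2 < ((univ.filter (fun i : Fin h =>
          plitVal (MGAAux.Phi L f) (L i).val.1 = some true ∧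
          plitVal (MGAAux.Phi L f) (L i).val.2 = some true)).card : ℝ) := by
        rw [hf]
        exact hαb
      rw [hfilt f] at hb
      exact hb
  have hB2 : 2 * Nat.card {α : PAssign n // satAssign H α ∧ badP α} ≤ 3 ^ h := by
    rw [← hBbij]
    exact MGAAux.bad_card
  -- subset inequality
  set S1 : Set (PAssign n) := {α | satAssign H α ∧ extendable F α} with hS1
  set S2 : Set (PAssign n) := {α | satAssign H α ∧ extendable F α ∧
      ((univ.filter (fun i : Fin h =>
        plitVal α (L i).val.1 = some true ∧
        plitVal α (L i).val.2 = some true)).card : ℝ) ≤ (h : ℝ) / 2} with hS2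
  set S3 : Set (PAssign n) := {α | satAssign H α ∧ badP α} with hS3
  have hsub : S1 ⊆ S2 ∪ S3 := by
    intro α hα
    by_cases hb : badP α
    · exact Or.inr ⟨hα.1, hb⟩
    · exact Or.inl ⟨hα.1, hα.2, not_lt.mp hb⟩
  have hcard1 : Nat.card {α : PAssign n // satAssign H α ∧ extendable F α} = S1.ncard :=
    Nat.card_coe_set_eq _
  have hcard2 : Nat.card {α : PAssign n //
      satAssign H α ∧ extendable F α ∧
      ((univ.filter (fun i : Fin h =>
        plitVal α (L i).val.1 = some true ∧
        plitVal α (L i).val.2 = some true)).card : ℝ) ≤ (h : ℝ) / 2} = S2.ncard :=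
    Nat.card_coe_set_eq _
  have hcard3 : Nat.card {α : PAssign n // satAssign H α ∧ badP α} = S3.ncard :=
    Nat.card_coe_set_eq _
  have hle : S1.ncard ≤ S2.ncard + S3.ncard :=
    le_trans (Set.ncard_le_ncard hsub (Set.toFinite _)) (Set.ncard_union_le _ _)
  rw [hcard1] at hAge
  rw [hcard3] at hB2
  rw [hcard2]
  have hB2' : 2 * (S3.ncard : ℝ) ≤ (3 : ℝ) ^ h := by
    rw [← hcast]
    exact_mod_cast hB2
  have hle' : (S1.ncard : ℝ) ≤ (S2.ncard : ℝ) + (S3.ncard : ℝ) := by exact_mod_cast hle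
  linarith
end

section
/- Let H = ⋀_{i=1}^{h} (ℓ_i ∨ ℓ_{h+i}) be a matching formula with h clauses, and let 𝒜' ⊆ sat(H) be such that every α ∈ 𝒜' satisfies α(ℓ_i) = α(ℓ_{h+i}) = 1 for at most h/2 indices i ∈ {1,…,h}. Then there exists 𝒜 ⊆ 𝒜' with |𝒜| ≥ |𝒜'| / (3^{h/2}·2^{h/2}) such that for all distinct α, β ∈ 𝒜 there is an index i ∈ {1,…,h} with α(ℓ_i) ≠ β(ℓ_i) and α(ℓ_{h+i}) ≠ β(ℓ_{h+i}). -/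
open Finset Filter

lemma plit_inj {n} {α β : PAssign n} {ℓ : Fin n × Bool}
    (hp : plitVal α ℓ = plitVal β ℓ) : α ℓ.1 = β ℓ.1 := by
  have hinj : Function.Injective (fun b : Bool => if ℓ.2 then b else !b) := by
    cases hb : ℓ.2 <;> intro a b <;> simp [hb]
  exact Option.map_injective hinj hp

lemma pat {n h : ℕ} (L : Fin h → Clause n) {α : PAssign n}
    (hα : satAssign (↑(List.ofFn L) : Multiset (Clause n)) α) (i : Fin h) :
    ∃ a b : Bool, plitVal α (L i).val.1 = some a ∧ plitVal α (L i).val.2 = some b ∧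
      (a || b) = true := by
  have hmem : L i ∈ (↑(List.ofFn L) : Multiset (Clause n)) := by
    simp [List.mem_ofFn]
  have hvars : ∀ x ∈ vars (L i), ∃ c, α x = some c := by
    intro x hx
    have hx' : x ∈ mvars (↑(List.ofFn L) : Multiset (Clause n)) :=
      Finset.mem_biUnion.mpr ⟨L i, Multiset.mem_toFinset.mpr hmem, hx⟩
    rw [← hα.1] at hx'
    simp only [support, Finset.mem_filter] at hx'
    exact Option.isSome_iff_exists.mp hx'.2
  obtain ⟨c₁, hc₁⟩ := hvars (L i).val.1.1 (by simp [vars])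
  obtain ⟨c₂, hc₂⟩ := hvars (L i).val.2.1 (by simp [vars])
  refine ⟨if (L i).val.1.2 then c₁ else !c₁, if (L i).val.2.2 then c₂ else !c₂,
    by simp [plitVal, hc₁], by simp [plitVal, hc₂], ?_⟩
  rcases hα.2 _ hmem with hs | hs <;>
    simp only [plitVal, hc₁, hc₂, Option.map_some] at hs <;>
    simp [Option.some_inj.mp hs]

lemma bool_pat : ∀ a₁ a₂ b₁ b₂ : Bool, (a₁ || a₂) = true → (b₁ || b₂) = true →
    ((a₁ = true ∧ a₂ = true) ↔ (b₁ = true ∧ b₂ = true)) → (a₁ = b₁ ∨ a₂ = b₂) →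
    a₁ = b₁ ∧ a₂ = b₂ := by decide

/-- If `H = ⋀_{i=1}^h (ℓ_i ∨ ℓ_{h+i})` is a matching formula and `𝒜' ⊆ sat(H)` is such
that every `α ∈ 𝒜'` sets both literals of at most `h/2` clauses to `1`, then there is
`𝒜 ⊆ 𝒜'` with `|𝒜| ≥ |𝒜'|/(3^{h/2}·2^{h/2})` such that any two distinct `α, β ∈ 𝒜`
disagree on both literals of some clause. -/
theorem crossing_subset (n h : ℕ) (L : Fin h → Clause n)
    (hmatch : ∀ i j, i ≠ j → Disjoint (vars (L i)) (vars (L j)))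
    (A' : Finset (PAssign n))
    (hsat : ∀ α ∈ A', satAssign (↑(List.ofFn L) : Multiset (Clause n)) α)
    (hones : ∀ α ∈ A',
      ((univ.filter (fun i : Fin h =>
          plitVal α (L i).val.1 = some true ∧
          plitVal α (L i).val.2 = some true)).card : ℝ) ≤ (h : ℝ) / 2) :
    ∃ A ⊆ A',
      (A'.card : ℝ) / ((3 : ℝ) ^ ((h : ℝ) / 2) * (2 : ℝ) ^ ((h : ℝ) / 2)) ≤ (A.card : ℝ) ∧
      ∀ α ∈ A, ∀ β ∈ A, α ≠ β → ∃ i : Fin h,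
        plitVal α (L i).val.1 ≠ plitVal β (L i).val.1 ∧
        plitVal α (L i).val.2 ≠ plitVal β (L i).val.2 := by
  classical
  set f : PAssign n → Finset (Fin h) := fun α =>
    univ.filter (fun i => plitVal α (L i).val.1 = some true ∧
      plitVal α (L i).val.2 = some true) with hf
  -- pigeonhole: some fiber has size ≥ |A'|/2^h
  have hsum : (A'.card : ℝ) =
      ∑ s : Finset (Fin h), ((A'.filter fun α => f α = s).card : ℝ) := by
    exact_mod_cast congrArg Nat.cast
      (Finset.card_eq_sum_card_fiberwise (f := f) (t := univ) (fun x _ => mem_univ _))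
  obtain ⟨s, hs⟩ : ∃ s : Finset (Fin h),
      (A'.card : ℝ) / 2 ^ h ≤ ((A'.filter fun α => f α = s).card : ℝ) := by
    by_contra hcon
    push_neg at hcon
    have hlt : (A'.card : ℝ) < 2 ^ h * ((A'.card : ℝ) / 2 ^ h) := by
      calc (A'.card : ℝ) = ∑ s : Finset (Fin h), ((A'.filter fun α => f α = s).card : ℝ) :=
            hsum
        _ < ∑ _s : Finset (Fin h), (A'.card : ℝ) / 2 ^ h :=
            Finset.sum_lt_sum_of_nonempty univ_nonempty (fun s _ => hcon s)
        _ = 2 ^ h * ((A'.card : ℝ) / 2 ^ h) := by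
            rw [Finset.sum_const, card_univ, Fintype.card_finset, Fintype.card_fin,
              nsmul_eq_mul, Nat.cast_pow, Nat.cast_ofNat]
    have h2 : (2 : ℝ) ^ h ≠ 0 := by positivity
    rw [mul_div_cancel₀ _ h2] at hlt
    exact lt_irrefl _ hlt
  refine ⟨A'.filter fun α => f α = s, Finset.filter_subset _ _, ?_, ?_⟩
  · -- counting bound
    refine le_trans ?_ hs
    have hbig : (2 : ℝ) ^ h ≤ (3 : ℝ) ^ ((h : ℝ) / 2) * (2 : ℝ) ^ ((h : ℝ) / 2) := by
      have h6 : (3 : ℝ) ^ ((h : ℝ) / 2) * (2 : ℝ) ^ ((h : ℝ) / 2) =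
          (6 : ℝ) ^ ((h : ℝ) / 2) := by
        rw [← Real.mul_rpow (by norm_num) (by norm_num)]; norm_num
      have h4 : (2 : ℝ) ^ h = (4 : ℝ) ^ ((h : ℝ) / 2) := by
        rw [show (4 : ℝ) = (2 : ℝ) ^ (2 : ℝ) by
            rw [show (2:ℝ) = ((2:ℕ):ℝ) by norm_num, Real.rpow_natCast]; norm_num,
          ← Real.rpow_natCast (2 : ℝ) h, ← Real.rpow_mul (by norm_num)]
        ring_nf
      rw [h6, h4]
      exact Real.rpow_le_rpow (by norm_num) (by norm_num) (by positivity)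
    have hpos : (0 : ℝ) < 2 ^ h := by positivity
    exact div_le_div_of_nonneg_left (Nat.cast_nonneg _) hpos hbig
  · -- crossing property
    intro α hα β hβ hne
    rw [Finset.mem_filter] at hα hβ
    by_contra hcon
    push_neg at hcon
    -- per-clause pattern equality
    have key : ∀ i : Fin h, plitVal α (L i).val.1 = plitVal β (L i).val.1 ∧
        plitVal α (L i).val.2 = plitVal β (L i).val.2 := by
      intro i
      obtain ⟨a₁, a₂, ha₁, ha₂, hoa⟩ := pat L (hsat α hα.1) i
      obtain ⟨b₁, b₂, hb₁, hb₂, hob⟩ := pat L (hsat β hβ.1) i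
      have hmemiff : i ∈ f α ↔ i ∈ f β := by rw [hα.2, hβ.2]
      have h1 : i ∈ f α ↔ (a₁ = true ∧ a₂ = true) := by
        rw [hf]
        simp only [Finset.mem_filter, Finset.mem_univ, true_and, ha₁, ha₂,
          Option.some_inj]
      have h2 : i ∈ f β ↔ (b₁ = true ∧ b₂ = true) := by
        rw [hf]
        simp only [Finset.mem_filter, Finset.mem_univ, true_and, hb₁, hb₂,
          Option.some_inj]
      have hiff : (a₁ = true ∧ a₂ = true) ↔ (b₁ = true ∧ b₂ = true) :=
        (h1.symm.trans hmemiff).trans h2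
      have hone : a₁ = b₁ ∨ a₂ = b₂ := by
        by_cases hc : plitVal α (L i).val.1 = plitVal β (L i).val.1
        · left; rw [ha₁, hb₁] at hc; exact Option.some_inj.mp hc
        · right
          have hc2 := hcon i hc
          rw [ha₂, hb₂] at hc2; exact Option.some_inj.mp hc2
      have heq := bool_pat a₁ a₂ b₁ b₂ hoa hob hiff hone
      exact ⟨by rw [ha₁, hb₁, heq.1], by rw [ha₂, hb₂, heq.2]⟩
    -- conclude α = β
    apply hne
    funext x
    by_cases hx : x ∈ mvars (↑(List.ofFn L) : Multiset (Clause n))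
    · obtain ⟨C, hC, hxC⟩ := Finset.mem_biUnion.mp hx
      rw [Multiset.mem_toFinset, Multiset.mem_coe, List.mem_ofFn] at hC
      obtain ⟨i, rfl⟩ := hC
      rcases Finset.mem_insert.mp hxC with h1 | h2
      · rw [h1]; exact plit_inj (key i).1
      · rw [Finset.mem_singleton.mp h2]; exact plit_inj (key i).2
    · have hxα : α x = none := by
        have hxs : x ∉ support α := by rw [(hsat α hα.1).1]; exact hx
        simp only [support, Finset.mem_filter, mem_univ, true_and] at hxs
        exact Option.not_isSome_iff_eq_none.mp hxs
      have hxβ : β x = none := by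
        have hxs : x ∉ support β := by rw [(hsat β hβ.1).1]; exact hx
        simp only [support, Finset.mem_filter, mem_univ, true_and] at hxs
        exact Option.not_isSome_iff_eq_none.mp hxs
      rw [hxα, hxβ]
end

section
/- Let F be a 2-CNF over a variable set V, let (Π₁, Π₂) be a partition of V, and let H = ⋀_{i=1}^{h} (ℓ_i ∨ ℓ_{h+i}) be a subformula of F (every clause of H is a clause of F) with var(ℓ_i) ∈ Π₁ and var(ℓ_{h+i}) ∈ Π₂ for all i ∈ {1,…,h}, and with ℓ_1,…,ℓ_{2h} on pairwise distinct variables. Let 𝒜 ⊆ sat(H) be such that every α ∈ 𝒜 extends to a full satisfying assignment of F, and such that for all distinct α, β ∈ 𝒜 there is an index i with α(ℓ_i) ≠ β(ℓ_i) and α(ℓ_{h+i}) ≠ β(ℓ_{h+i}). For each α ∈ 𝒜 fix a satisfying assignment α* ∈ sat(F) extending α, and let α*₁ denote its restriction to Π₁. Then for all distinct α, β ∈ 𝒜, the two Boolean functions on assignments of Π₂ given by τ ↦ [α*₁ ∪ τ satisfies F] and τ ↦ [β*₁ ∪ τ satisfies F] are distinct. -/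
open Finset Filter

/-- Let `H = ⋀_{i=1}^h (ℓ_i ∨ ℓ_{h+i})` be a matching subformula of the 2-CNF `F`,
crossing the partition `(P1, P1ᶜ)` of the variables.  Let `𝒜 ⊆ sat(H)` be a set of
assignments, each extending (via a chosen `astar α ∈ sat(F)`) to a satisfying assignment
of `F`, such that any two distinct members disagree on both literals of some clause of
`H`.  Then for distinct `α, β ∈ 𝒜`, the Boolean functions
`τ ↦ [astar α restricted to P1, combined with τ on P1ᶜ, satisfies F]` and the analogous
function for `β` are distinct. -/
theorem distinct_residual_functions (n h : ℕ) (F : Multiset (Clause n))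
    (P1 : Finset (Fin n)) (L : Fin h → Clause n)
    (hsub : ∀ i, L i ∈ F)
    (hside : ∀ i, (L i).val.1.1 ∈ P1 ∧ (L i).val.2.1 ∉ P1)
    (hmatch : ∀ i j, i ≠ j → Disjoint (vars (L i)) (vars (L j)))
    (A : Finset (PAssign n))
    (hA : ∀ α ∈ A, satAssign (↑(List.ofFn L) : Multiset (Clause n)) α)
    (astar : PAssign n → (Fin n → Bool))
    (hstar : ∀ α ∈ A, (∀ x b, α x = some b → astar α x = b) ∧
      ∀ C ∈ F, clauseSat (astar α) C)
    (hcross : ∀ α ∈ A, ∀ β ∈ A, α ≠ β → ∃ i : Fin h,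
      plitVal α (L i).val.1 ≠ plitVal β (L i).val.1 ∧
      plitVal α (L i).val.2 ≠ plitVal β (L i).val.2) :
    ∀ α ∈ A, ∀ β ∈ A, α ≠ β →
      ∃ τ : Fin n → Bool,
        ¬ ((∀ C ∈ F, clauseSat (fun x => if x ∈ P1 then astar α x else τ x) C) ↔
           (∀ C ∈ F, clauseSat (fun x => if x ∈ P1 then astar β x else τ x) C)) := by
  have lit_congr : ∀ (σ σ' : Fin n → Bool) (ℓ : Fin n × Bool), σ ℓ.1 = σ' ℓ.1 →
      litVal σ ℓ = litVal σ' ℓ := by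
    intro σ σ' ℓ hx; simp [litVal, hx]
  have hpl : ∀ γ ∈ A, ∀ ℓ : Fin n × Bool, ∀ c, γ ℓ.1 = some c →
      plitVal γ ℓ = some (litVal (astar γ) ℓ) := by
    intro γ hγ ℓ c hc
    have hh := (hstar γ hγ).1 ℓ.1 c hc
    simp [plitVal, litVal, hc, hh]
  intro α hα β hβ hne
  obtain ⟨i, hd1, hd2⟩ := hcross α hα β hβ hne
  have hCF : L i ∈ F := hsub i
  have hCH : L i ∈ (↑(List.ofFn L) : Multiset (Clause n)) := by
    simp [List.mem_ofFn]
  have hsome : ∀ γ ∈ A, ∀ x ∈ vars (L i), ∃ c, γ x = some c := by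
    intro γ hγ x hx
    have hs := (hA γ hγ).1
    have hx' : x ∈ mvars (↑(List.ofFn L) : Multiset (Clause n)) :=
      Finset.mem_biUnion.mpr ⟨L i, Multiset.mem_toFinset.mpr hCH, hx⟩
    rw [← hs] at hx'
    simp only [support, Finset.mem_filter] at hx'
    exact Option.isSome_iff_exists.mp hx'.2
  have hv1 : (L i).val.1.1 ∈ vars (L i) := by simp [vars]
  have hv2 : (L i).val.2.1 ∈ vars (L i) := by simp [vars]
  obtain ⟨c1a, hc1a⟩ := hsome α hα _ hv1
  obtain ⟨c2a, hc2a⟩ := hsome α hα _ hv2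
  obtain ⟨c1b, hc1b⟩ := hsome β hβ _ hv1
  obtain ⟨c2b, hc2b⟩ := hsome β hβ _ hv2
  have pa1 := hpl α hα (L i).val.1 c1a hc1a
  have pa2 := hpl α hα (L i).val.2 c2a hc2a
  have pb1 := hpl β hβ (L i).val.1 c1b hc1b
  have pb2 := hpl β hβ (L i).val.2 c2b hc2b
  rw [pa1, pb1] at hd1
  rw [pa2, pb2] at hd2
  have hd1' : litVal (astar α) (L i).val.1 ≠ litVal (astar β) (L i).val.1 :=
    fun hh => hd1 (by rw [hh])
  have hd2' : litVal (astar α) (L i).val.2 ≠ litVal (astar β) (L i).val.2 :=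
    fun hh => hd2 (by rw [hh])
  have hsA : litVal (astar α) (L i).val.1 = true ∨ litVal (astar α) (L i).val.2 = true := by
    rcases (hA α hα).2 (L i) hCH with hh | hh
    · left; rw [pa1] at hh; exact Option.some.inj hh
    · right; rw [pa2] at hh; exact Option.some.inj hh
  have hsB : litVal (astar β) (L i).val.1 = true ∨ litVal (astar β) (L i).val.2 = true := by
    rcases (hA β hβ).2 (L i) hCH with hh | hh
    · left; rw [pb1] at hh; exact Option.some.inj hh
    · right; rw [pb2] at hh; exact Option.some.inj hh
  rcases Bool.eq_false_or_eq_true (litVal (astar α) (L i).val.1) with h1 | h1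
  · -- α's first literal is true, β's first is false, so β's second is true and
    -- α's second is false.  Use τ := astar α.
    have hB1 : litVal (astar β) (L i).val.1 = false := by
      rw [h1] at hd1'
      revert hd1'; cases litVal (astar β) (L i).val.1 <;> simp
    have hB2 : litVal (astar β) (L i).val.2 = true := by
      rcases hsB with hh | hh
      · rw [hB1] at hh; exact absurd hh (by simp)
      · exact hh
    have hA2 : litVal (astar α) (L i).val.2 = false := by
      rw [hB2] at hd2'
      revert hd2'; cases litVal (astar α) (L i).val.2 <;> simp
    refine ⟨astar α, fun hiff => ?_⟩
    have hLh : ∀ C ∈ F, clauseSat (fun x => if x ∈ P1 then astar α x else astar α x) C := by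
      simpa using (hstar α hα).2
    have hR := hiff.mp hLh
    have hCi := hR (L i) hCF
    have e1 : litVal (fun x => if x ∈ P1 then astar β x else astar α x) (L i).val.1
        = litVal (astar β) (L i).val.1 :=
      lit_congr _ _ _ (by simp [(hside i).1])
    have e2 : litVal (fun x => if x ∈ P1 then astar β x else astar α x) (L i).val.2
        = litVal (astar α) (L i).val.2 :=
      lit_congr _ _ _ (by simp [(hside i).2])
    rcases hCi with hh | hh
    · rw [e1, hB1] at hh; exact absurd hh (by simp)
    · rw [e2, hA2] at hh; exact absurd hh (by simp)
  · -- α's first literal is false, so α's second is true, β's second is false,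
    -- hence β's first is true.  Use τ := astar β.
    have hA2 : litVal (astar α) (L i).val.2 = true := by
      rcases hsA with hh | hh
      · rw [h1] at hh; exact absurd hh (by simp)
      · exact hh
    have hB2 : litVal (astar β) (L i).val.2 = false := by
      rw [hA2] at hd2'
      revert hd2'; cases litVal (astar β) (L i).val.2 <;> simp
    refine ⟨astar β, fun hiff => ?_⟩
    have hR : ∀ C ∈ F, clauseSat (fun x => if x ∈ P1 then astar β x else astar β x) C := by
      simpa using (hstar β hβ).2
    have hL := hiff.mpr hR
    have hCi := hL (L i) hCF
    have e1 : litVal (fun x => if x ∈ P1 then astar α x else astar β x) (L i).val.1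
        = litVal (astar α) (L i).val.1 :=
      lit_congr _ _ _ (by simp [(hside i).1])
    have e2 : litVal (fun x => if x ∈ P1 then astar α x else astar β x) (L i).val.2
        = litVal (astar β) (L i).val.2 :=
      lit_congr _ _ _ (by simp [(hside i).2])
    rcases hCi with hh | hh
    · rw [e1, h1] at hh; exact absurd hh (by simp)
    · rw [e2, hB2] at hh; exact absurd hh (by simp)
end

section
/- Let F be a 2-CNF, possibly with duplicate clauses, and partition the clauses of F into two subformulas F₁ and F₂. Suppose F₁ is a matching formula and θ(F₁, F₂) ≥ 2/3. Then for every subformula H of F₁ (a sub-collection of the clauses of F₁), θ(H, F) ≥ 2/3. -/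
open Finset Filter
open scoped Classical

section Aux
variable {n : ℕ}

lemma mem_support_iff {α : PAssign n} {x : Fin n} : x ∈ support α ↔ (α x).isSome := by
  simp [support]

lemma mem_mvars {K : Multiset (Clause n)} {x : Fin n} :
    x ∈ mvars K ↔ ∃ C ∈ K, x ∈ vars C := by simp [mvars]

lemma vars_subset_mvars {K : Multiset (Clause n)} {C : Clause n} (h : C ∈ K) :
    vars C ⊆ mvars K := fun x hx => mem_mvars.2 ⟨C, h, hx⟩

lemma mvars_add (s t : Multiset (Clause n)) : mvars (s + t) = mvars s ∪ mvars t := by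
  ext x
  simp only [mvars, Multiset.toFinset_add, Finset.mem_biUnion, Finset.mem_union, Multiset.mem_toFinset]
  constructor
  · rintro ⟨C, hC | hC, hx⟩
    exacts [Or.inl ⟨C, hC, hx⟩, Or.inr ⟨C, hC, hx⟩]
  · rintro (⟨C, hC, hx⟩ | ⟨C, hC, hx⟩)
    exacts [⟨C, Or.inl hC, hx⟩, ⟨C, Or.inr hC, hx⟩]

def restrictP (α : PAssign n) (S : Finset (Fin n)) : PAssign n :=
  fun x => if x ∈ S then α x else none

def combineP (α γ : PAssign n) : PAssign n := fun x => (α x).orElse (fun _ => γ x)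

lemma restrictP_eq_of_mem {α : PAssign n} {S : Finset (Fin n)} {x : Fin n} (h : x ∈ S) :
    restrictP α S x = α x := if_pos h

lemma restrictP_eq_of_not_mem {α : PAssign n} {S : Finset (Fin n)} {x : Fin n} (h : x ∉ S) :
    restrictP α S x = none := if_neg h

lemma support_restrictP (α : PAssign n) (S : Finset (Fin n)) :
    support (restrictP α S) = support α ∩ S := by
  ext x; by_cases h : x ∈ S <;> simp [mem_support_iff, restrictP, h]

lemma combineP_eq_left {α γ : PAssign n} {x : Fin n} {b : Bool} (h : α x = some b) :
    combineP α γ x = some b := by simp [combineP, h]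

lemma combineP_eq_right {α γ : PAssign n} {x : Fin n} (h : α x = none) :
    combineP α γ x = γ x := by simp [combineP, h]

lemma support_combineP (α γ : PAssign n) :
    support (combineP α γ) = support α ∪ support γ := by
  ext x; cases h : α x <;> simp [mem_support_iff, combineP, h]

lemma pClauseSat_congr {α β : PAssign n} {C : Clause n}
    (h : ∀ x ∈ vars C, α x = β x) (hs : pClauseSat α C) : pClauseSat β C := by
  have h1 : α C.val.1.1 = β C.val.1.1 := h _ (by simp [vars])
  have h2 : α C.val.2.1 = β C.val.2.1 := h _ (by simp [vars])
  unfold pClauseSat plitVal at *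
  rw [h1, h2] at hs; exact hs

lemma litVal_of_plitVal {σ : Fin n → Bool} {α : PAssign n}
    (hext : ∀ x b, α x = some b → σ x = b) {ℓ : Fin n × Bool}
    (h : plitVal α ℓ = some true) : litVal σ ℓ = true := by
  unfold plitVal at h
  cases hα : α ℓ.1 with
  | none => rw [hα] at h; simp at h
  | some b =>
    rw [hα] at h; simp only [Option.map_some, Option.some.injEq] at h
    have hσ := hext _ _ hα
    unfold litVal; rw [hσ]; exact h

lemma clauseSat_of_pClauseSat {σ : Fin n → Bool} {α : PAssign n} {C : Clause n}
    (hext : ∀ x b, α x = some b → σ x = b) (h : pClauseSat α C) : clauseSat σ C :=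
  h.imp (litVal_of_plitVal hext) (litVal_of_plitVal hext)

lemma clause_eq_of_shared {F : Multiset (Clause n)}
    (hm : Multiset.Pairwise (fun C D => Disjoint (vars C) (vars D)) F)
    {C D : Clause n} (hC : C ∈ F) (hD : D ∈ F) {x : Fin n}
    (hxC : x ∈ vars C) (hxD : x ∈ vars D) : C = D := by
  obtain ⟨l, rfl, hp⟩ := hm
  by_contra hne
  have hd := (haveI : Std.Symm (fun C D : Clause n => Disjoint (vars C) (vars D)) := ⟨fun a b h => h.symm⟩; hp.forall (Multiset.mem_coe.1 hC) (Multiset.mem_coe.1 hD) hne)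
  exact Finset.disjoint_left.1 hd hxC hxD

lemma nodup_of_pairwise {F : Multiset (Clause n)}
    (hm : Multiset.Pairwise (fun C D => Disjoint (vars C) (vars D)) F) : F.Nodup := by
  obtain ⟨l, rfl, hp⟩ := hm
  refine Multiset.coe_nodup.2 (hp.imp ?_)
  intro a b hd
  rintro rfl
  have := _root_.disjoint_self.1 hd
  have h1 : a.val.1.1 ∈ vars a := by simp [vars]
  rw [this] at h1
  simp at h1

lemma disjoint_mvars {F H : Multiset (Clause n)}
    (hm : Multiset.Pairwise (fun C D => Disjoint (vars C) (vars D)) F) (hH : H ≤ F) :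
    Disjoint (mvars H) (mvars (F - H)) := by
  rw [Finset.disjoint_left]
  intro x hxH hxK
  obtain ⟨C, hC, hxC⟩ := mem_mvars.1 hxH
  obtain ⟨D, hD, hxD⟩ := mem_mvars.1 hxK
  have hCF : C ∈ F := Multiset.mem_of_le hH hC
  have hDF : D ∈ F := Multiset.mem_of_le tsub_le_self hD
  have hCD : C = D := clause_eq_of_shared hm hCF hDF hxC hxD
  subst hCD
  have h1 : 1 ≤ H.count C := Multiset.one_le_count_iff_mem.2 hC
  have h2 : 1 ≤ (F - H).count C := Multiset.one_le_count_iff_mem.2 hD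
  rw [Multiset.count_sub] at h2
  have h3 : F.count C ≤ 1 := Multiset.nodup_iff_count_le_one.1 (nodup_of_pairwise hm) C
  omega

lemma satAssign_restrict {G H : Multiset (Clause n)} (hHG : H ≤ G) {β : PAssign n}
    (hβ : satAssign G β) : satAssign H (restrictP β (mvars H)) := by
  obtain ⟨hsupp, hsat⟩ := hβ
  constructor
  · rw [support_restrictP, hsupp, Finset.inter_eq_right.2]
    intro x hx
    obtain ⟨C, hC, hxC⟩ := mem_mvars.1 hx
    exact mem_mvars.2 ⟨C, Multiset.mem_of_le hHG hC, hxC⟩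
  · intro C hC
    exact pClauseSat_congr (fun x hx => (restrictP_eq_of_mem (vars_subset_mvars hC hx)).symm)
      (hsat C (Multiset.mem_of_le hHG hC))

lemma satAssign_combine {H K : Multiset (Clause n)} (hdisj : Disjoint (mvars H) (mvars K))
    {α γ : PAssign n} (hα : satAssign H α) (hγ : satAssign K γ) :
    satAssign (H + K) (combineP α γ) := by
  obtain ⟨hsα, hα2⟩ := hα
  obtain ⟨hsγ, hγ2⟩ := hγ
  constructor
  · rw [support_combineP, hsα, hsγ, mvars_add]
  · intro C hC
    rcases Multiset.mem_add.1 hC with h | h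
    · refine pClauseSat_congr (fun x hx => ?_) (hα2 C h)
      have hxα : x ∈ support α := by rw [hsα]; exact vars_subset_mvars h hx
      obtain ⟨b, hb⟩ := Option.isSome_iff_exists.1 (mem_support_iff.1 hxα)
      rw [hb, combineP_eq_left hb]
    · refine pClauseSat_congr (fun x hx => ?_) (hγ2 C h)
      have hxK : x ∈ mvars K := vars_subset_mvars h hx
      have hxα : α x = none := by
        have hns : x ∉ support α := by
          rw [hsα]; exact fun hmem => Finset.disjoint_left.1 hdisj hmem hxK
        exact Option.not_isSome_iff_eq_none.1 (fun hs => hns (mem_support_iff.2 hs))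
      rw [combineP_eq_right hxα]

lemma restrict_combine_left {α γ : PAssign n} :
    restrictP (combineP α γ) (support α) = α := by
  funext x
  by_cases h : x ∈ support α
  · obtain ⟨b, hb⟩ := Option.isSome_iff_exists.1 (mem_support_iff.1 h)
    rw [restrictP_eq_of_mem h, combineP_eq_left hb, hb]
  · rw [restrictP_eq_of_not_mem h]
    exact (Option.not_isSome_iff_eq_none.1 (fun hs => h (mem_support_iff.2 hs))).symm

lemma restrict_combine_right {α γ : PAssign n} (hd : Disjoint (support α) (support γ)) :
    restrictP (combineP α γ) (support γ) = γ := by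
  funext x
  by_cases h : x ∈ support γ
  · have hα : α x = none := Option.not_isSome_iff_eq_none.1
      (fun hs => Finset.disjoint_left.1 hd (mem_support_iff.2 hs) h)
    rw [restrictP_eq_of_mem h, combineP_eq_right hα]
  · rw [restrictP_eq_of_not_mem h]
    exact (Option.not_isSome_iff_eq_none.1 (fun hs => h (mem_support_iff.2 hs))).symm

lemma combine_restrict {β : PAssign n} {S T : Finset (Fin n)}
    (hsupp : support β = S ∪ T) :
    combineP (restrictP β S) (restrictP β T) = β := by
  funext x
  by_cases hS : x ∈ S
  · have hβ : (β x).isSome := mem_support_iff.1 (by rw [hsupp]; exact Finset.mem_union_left _ hS)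
    obtain ⟨b, hb⟩ := Option.isSome_iff_exists.1 hβ
    rw [combineP_eq_left (show restrictP β S x = some b by rw [restrictP_eq_of_mem hS]; exact hb), hb]
  · rw [combineP_eq_right (restrictP_eq_of_not_mem hS)]
    by_cases hT : x ∈ T
    · rw [restrictP_eq_of_mem hT]
    · rw [restrictP_eq_of_not_mem hT]
      refine (Option.not_isSome_iff_eq_none.1 (fun hs => ?_)).symm
      have hmem := mem_support_iff.2 hs
      rw [hsupp] at hmem
      rcases Finset.mem_union.1 hmem with h | h
      exacts [hS h, hT h]

lemma extendable_of_combine {H K F₂ : Multiset (Clause n)} {α γ : PAssign n}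
    (hdisj : Disjoint (mvars H) (mvars K))
    (hα : satAssign H α) (hγ : satAssign K γ)
    (h : extendable F₂ (combineP α γ)) : extendable (H + K + F₂) α := by
  obtain ⟨σ, hσext, hσsat⟩ := h
  have hcomb := satAssign_combine hdisj hα hγ
  refine ⟨σ, fun x b hb => hσext x b (combineP_eq_left hb), fun C hC => ?_⟩
  rcases Multiset.mem_add.1 hC with h | h
  · exact clauseSat_of_pClauseSat hσext (hcomb.2 C h)
  · exact hσsat C h

noncomputable def defA (K : Multiset (Clause n)) : PAssign n := fun x =>
  if h : ∃ C ∈ K, x ∈ vars C then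
    some (if h.choose.val.1.1 = x then h.choose.val.1.2 else h.choose.val.2.2)
  else none

lemma support_defA (K : Multiset (Clause n)) : support (defA K) = mvars K := by
  ext x
  rw [mem_support_iff, mem_mvars]
  by_cases h : ∃ C ∈ K, x ∈ vars C <;> simp [defA, h]

lemma satAssign_defA {F K : Multiset (Clause n)}
    (hm : Multiset.Pairwise (fun C D => Disjoint (vars C) (vars D)) F) (hK : K ≤ F) :
    satAssign K (defA K) := by
  refine ⟨support_defA K, fun C hC => ?_⟩
  have hval : ∀ x ∈ vars C,
      defA K x = some (if C.val.1.1 = x then C.val.1.2 else C.val.2.2) := by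
    intro x hx
    have hex : ∃ D ∈ K, x ∈ vars D := ⟨C, hC, hx⟩
    have hCD : hex.choose = C :=
      clause_eq_of_shared hm (Multiset.mem_of_le hK hex.choose_spec.1)
        (Multiset.mem_of_le hK hC) hex.choose_spec.2 hx
    rw [defA, dif_pos hex, hCD]
  left
  have h1 : defA K C.val.1.1 = some C.val.1.2 := by
    rw [hval _ (by simp [vars])]; simp
  unfold plitVal
  rw [h1]
  cases hb : C.val.1.2 <;> simp [hb]

end Aux

/-- Let the clauses of a 2-CNF `F` (possibly with duplicates) be partitioned into `F₁`
and `F₂`, where `F₁` is a matching formula (pairwise variable-disjoint clauses) and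
`θ(F₁,F₂) ≥ 2/3`.  Then `θ(H, F) ≥ 2/3` for every subformula `H` of `F₁`. -/
theorem theta_for_subformula (n : ℕ) (F₁ F₂ : Multiset (Clause n))
    (hmatch : Multiset.Pairwise (fun C D => Disjoint (vars C) (vars D)) F₁)
    (hθ : 2 / 3 ≤ theta F₁ F₂) :
    ∀ H ≤ F₁, 2 / 3 ≤ theta H (F₁ + F₂) := by
  intro H hH
  classical
  set K := F₁ - H with hKdef
  have hHK : H + K = F₁ := by rw [hKdef, add_comm]; exact tsub_add_cancel_of_le hH
  have hKle : K ≤ F₁ := tsub_le_self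
  have hdisj : Disjoint (mvars H) (mvars K) := disjoint_mvars hmatch hH
  have hcard : ∀ P : PAssign n → Prop,
      Nat.card {α : PAssign n // P α} = (univ.filter P).card := by
    intro P
    rw [Nat.card_eq_fintype_card, Fintype.card_subtype]
  have hpart : ∀ P Q : PAssign n → Prop,
      (univ.filter fun α : PAssign n => P α ∧ Q α).card
        + (univ.filter fun α : PAssign n => P α ∧ ¬ Q α).card
        = (univ.filter P).card := by
    intro P Q
    rw [← Finset.filter_filter, ← Finset.filter_filter,
      Finset.card_filter_add_card_filter_not]
  -- Finsets
  set sH := univ.filter (fun α : PAssign n => satAssign H α) with hsH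
  set sK := univ.filter (fun α : PAssign n => satAssign K α) with hsK
  set sF := univ.filter (fun α : PAssign n => satAssign F₁ α) with hsF
  set gA := univ.filter (fun α : PAssign n => satAssign H α ∧ extendable (F₁ + F₂) α) with hgA
  set bA := univ.filter (fun α : PAssign n => satAssign H α ∧ ¬ extendable (F₁ + F₂) α) with hbA
  set gF := univ.filter (fun α : PAssign n => satAssign F₁ α ∧ extendable F₂ α) with hgF
  set bF := univ.filter (fun α : PAssign n => satAssign F₁ α ∧ ¬ extendable F₂ α) with hbF
  have memsH : ∀ {α : PAssign n}, α ∈ sH ↔ satAssign H α := by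
    intro α; rw [hsH]; simp
  have memsK : ∀ {α : PAssign n}, α ∈ sK ↔ satAssign K α := by
    intro α; rw [hsK]; simp
  have memsF : ∀ {α : PAssign n}, α ∈ sF ↔ satAssign F₁ α := by
    intro α; rw [hsF]; simp
  have membA : ∀ {α : PAssign n}, α ∈ bA ↔ satAssign H α ∧ ¬ extendable (F₁ + F₂) α := by
    intro α; rw [hbA]; simp
  have membF : ∀ {α : PAssign n}, α ∈ bF ↔ satAssign F₁ α ∧ ¬ extendable F₂ α := by
    intro α; rw [hbF]; simp
  have memgA : ∀ {α : PAssign n}, α ∈ gA ↔ satAssign H α ∧ extendable (F₁ + F₂) α := by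
    intro α; rw [hgA]; simp
  have memgF : ∀ {α : PAssign n}, α ∈ gF ↔ satAssign F₁ α ∧ extendable F₂ α := by
    intro α; rw [hgF]; simp
  have hcard2 : ∀ (P : PAssign n → Prop) (s : Finset (PAssign n)), (∀ α, α ∈ s ↔ P α) →
      Nat.card {α : PAssign n // P α} = s.card := by
    intro P s hs
    rw [hcard]
    congr 1
    ext α
    simp [hs α]
  -- partition identities
  have hgbA : gA.card + bA.card = sH.card := hpart _ _
  have hgbF : gF.card + bF.card = sF.card := hpart _ _
  -- product formula
  have hrec : ∀ {α γ : PAssign n}, satAssign H α → satAssign K γ →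
      restrictP (combineP α γ) (mvars H) = α ∧ restrictP (combineP α γ) (mvars K) = γ := by
    intro α γ hα hγ
    have hd : Disjoint (support α) (support γ) := by rw [hα.1, hγ.1]; exact hdisj
    constructor
    · rw [← hα.1]; exact restrict_combine_left
    · rw [← hγ.1]; exact restrict_combine_right hd
  have hprod : sF.card = sH.card * sK.card := by
    rw [← Finset.card_product]
    refine Finset.card_bij'
      (fun β _ => (restrictP β (mvars H), restrictP β (mvars K)))
      (fun p _ => combineP p.1 p.2) ?_ ?_ ?_ ?_
    · intro β hβ
      rw [Finset.mem_product]
      have hβ' := memsF.1 hβ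
      exact ⟨memsH.2 (satAssign_restrict hH hβ'), memsK.2 (satAssign_restrict hKle hβ')⟩
    · intro p hp
      rw [Finset.mem_product] at hp
      exact memsF.2 (hHK ▸ satAssign_combine hdisj (memsH.1 hp.1) (memsK.1 hp.2))
    · intro β hβ
      have hβ' := memsF.1 hβ
      refine combine_restrict ?_
      rw [hβ'.1, ← hHK, mvars_add]
    · intro p hp
      rw [Finset.mem_product] at hp
      obtain ⟨h1, h2⟩ := hrec (memsH.1 hp.1) (memsK.1 hp.2)
      exact Prod.ext h1 h2
  -- nonemptiness of sK
  have hKpos : 0 < sK.card :=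
    Finset.card_pos.2 ⟨defA K, memsK.2 (satAssign_defA hmatch hKle)⟩
  -- injection bA × sK ↪ bF
  have hinj : bA.card * sK.card ≤ bF.card := by
    rw [← Finset.card_product]
    refine Finset.card_le_card_of_injOn (fun p => combineP p.1 p.2) ?_ ?_
    · rintro ⟨α, γ⟩ hp
      rw [Finset.mem_coe, Finset.mem_product] at hp
      obtain ⟨hαs, hαne⟩ := membA.1 hp.1
      have hγs := memsK.1 hp.2
      refine membF.2 ⟨hHK ▸ satAssign_combine hdisj hαs hγs, fun hext => hαne ?_⟩
      exact hHK ▸ extendable_of_combine hdisj hαs hγs hext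
    · rintro ⟨α, γ⟩ hp ⟨α', γ'⟩ hp' heq
      rw [Finset.mem_coe, Finset.mem_product] at hp hp'
      obtain ⟨h1, h2⟩ := hrec (membA.1 hp.1).1 (memsK.1 hp.2)
      obtain ⟨h1', h2'⟩ := hrec (membA.1 hp'.1).1 (memsK.1 hp'.2)
      simp only at heq
      refine Prod.ext ?_ ?_
      · rw [← h1, ← h1', heq]
      · rw [← h2, ← h2', heq]
  -- main case split
  by_cases ha : sH.card = 0
  · rw [theta, if_pos (by rw [hcard2 _ sH fun α => memsH]; exact ha)]; norm_num
  · have hm : sF.card ≠ 0 := by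
      rw [hprod]; exact Nat.mul_ne_zero ha hKpos.ne'
    rw [theta, if_neg (by rw [hcard2 _ sF fun α => memsF]; exact hm),
      hcard2 _ gF fun α => memgF, hcard2 _ sF fun α => memsF] at hθ
    have hFpos : (0:ℝ) < (sF.card : ℝ) := by
      exact_mod_cast Nat.pos_of_ne_zero hm
    rw [div_le_div_iff₀ (by norm_num) hFpos] at hθ
    have hθ' : 2 * sF.card ≤ 3 * gF.card := by exact_mod_cast (by linarith : (2:ℝ) * sF.card ≤ 3 * gF.card)
    have h3bF : 3 * bF.card ≤ sF.card := by omega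
    have hmul : (3 * bA.card) * sK.card ≤ sH.card * sK.card := by
      calc (3 * bA.card) * sK.card = 3 * (bA.card * sK.card) := by ring
        _ ≤ 3 * bF.card := Nat.mul_le_mul_left 3 hinj
        _ ≤ sF.card := h3bF
        _ = sH.card * sK.card := hprod
    have h2 : 3 * bA.card ≤ sH.card := Nat.le_of_mul_le_mul_right hmul hKpos
    have hgoal : 2 * sH.card ≤ 3 * gA.card := by omega
    rw [theta, if_neg (by rw [hcard2 _ sH fun α => memsH]; exact ha),
      hcard2 _ gA fun α => memgA, hcard2 _ sH fun α => memsH]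
    have hHpos : (0:ℝ) < (sH.card : ℝ) := by
      exact_mod_cast Nat.pos_of_ne_zero ha
    rw [div_le_div_iff₀ (by norm_num) hHpos]
    calc (2:ℝ) * sH.card = (2 * sH.card : ℕ) := by push_cast; ring
      _ ≤ (3 * gA.card : ℕ) := by exact_mod_cast hgoal
      _ = (gA.card:ℝ) * 3 := by push_cast; ring
end

section
/- Let n, k ∈ ℕ with 2k ≤ n, and let α be drawn from 𝓕₁(n,2k). Then: (a) for all m ≤ m' ≤ 4·(n choose 2), if G ∼ 𝓗₂(n,m') and G' ∼ 𝓗₂(n,m), each independent of α, then Pr[α ∧ G is satisfiable] ≤ Pr[α ∧ G' is satisfiable]; and (b) for all m ≤ 4·(n choose 2), if G ∼ 𝓕₂(n,m) and G'' ∼ 𝓗₂(n,m), each independent of α, then Pr[α ∧ G is satisfiable] ≤ Pr[α ∧ G'' is satisfiable]. -/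
open Finset Filter

/-! ### Auxiliary general counting lemmas -/

section General
variable {γ : Type*} [Fintype γ] [DecidableEq γ]

/-- A permutation carrying one finset onto another of the same size. -/
lemma perm_of_card_eq {S S' : Finset γ} (h : S.card = S'.card) :
    ∃ π : Equiv.Perm γ, S.image π = S' := by
  classical
  have hc : Fintype.card {x // x ∉ S} = Fintype.card {x // x ∉ S'} := by
    have h1 : Fintype.card {x // x ∈ S} = Fintype.card {x // x ∈ S'} := by
      simpa using h
    rw [Fintype.card_subtype_compl (· ∈ S), Fintype.card_subtype_compl (· ∈ S'), h1]
  let e₁ : {x // x ∈ S} ≃ {x // x ∈ S'} := Finset.equivOfCardEq h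
  let e₂ : {x // x ∉ S} ≃ {x // x ∉ S'} := Fintype.equivOfCardEq hc
  let π : Equiv.Perm γ :=
    ((Equiv.sumCompl (· ∈ S)).symm.trans (Equiv.sumCongr e₁ e₂)).trans
      (Equiv.sumCompl (· ∈ S'))
  refine ⟨π, ?_⟩
  have hmem : ∀ x ∈ S, π x ∈ S' := by
    intro x hx
    have : π x = (e₁ ⟨x, hx⟩ : γ) := by
      simp [π, Equiv.sumCompl_symm_apply_of_pos hx]
    rw [this]
    exact (e₁ ⟨x, hx⟩).2
  apply Finset.eq_of_subset_of_card_le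
  · intro y hy
    obtain ⟨x, hx, rfl⟩ := Finset.mem_image.mp hy
    exact hmem x hx
  · rw [Finset.card_image_of_injective _ π.injective, h]

/-- The number of `m`-tuples with image a given set depends only on its size. -/
lemma cnt_const (m : ℕ) {S S' : Finset γ} (h : S.card = S'.card) :
    (univ.filter (fun f : Fin m → γ => image f univ = S)).card =
    (univ.filter (fun f : Fin m → γ => image f univ = S')).card := by
  obtain ⟨π, hπ⟩ := perm_of_card_eq h
  apply Finset.card_bij' (fun f _ => π ∘ f) (fun g _ => π.symm ∘ g)
  · intro f hf
    simp only [mem_filter, mem_univ, true_and] at hf ⊢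
    rw [← Finset.image_image, hf, hπ]
  · intro g hg
    simp only [mem_filter, mem_univ, true_and] at hg ⊢
    rw [← Finset.image_image, hg, ← hπ, Finset.image_image]
    simp
  · intro f _; funext i; simp
  · intro g _; funext i; simp

lemma sat_sets_ratio (P : Finset γ → Prop) [DecidablePred P]
    (hP : ∀ ⦃S T : Finset γ⦄, T ⊆ S → P S → P T) {j m : ℕ} (hj : j ≤ m) :
    (univ.filter (fun S : Finset γ => S.card = m ∧ P S)).card * (Fintype.card γ).choose j ≤
    (univ.filter (fun S : Finset γ => S.card = j ∧ P S)).card * (Fintype.card γ).choose m := by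
  classical
  set N := Fintype.card γ with hN
  by_cases hm : m ≤ N
  swap
  · have hemp : (univ.filter (fun S : Finset γ => S.card = m ∧ P S)) = ∅ := by
      apply Finset.filter_eq_empty_iff.mpr
      intro S _
      rintro ⟨hc, -⟩
      exact hm (hc ▸ (le_trans (Finset.card_le_card (Finset.subset_univ S)) (by simp [hN])))
    simp [hemp]
  have key : (univ.filter fun S : Finset γ => S.card = m ∧ P S).card * m.choose j ≤
      (univ.filter fun S : Finset γ => S.card = j ∧ P S).card * (N - j).choose (m - j) := by
    apply Finset.card_mul_le_card_mul (fun S T => T ⊆ S)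
    · intro S hS
      simp only [mem_filter, mem_univ, true_and] at hS
      have hsub : S.powersetCard j ⊆
          (univ.filter fun T : Finset γ => T.card = j ∧ P T).bipartiteAbove
            (fun S T => T ⊆ S) S := by
        intro T hT
        rw [Finset.mem_powersetCard] at hT
        simp only [Finset.bipartiteAbove, mem_filter, mem_univ, true_and]
        exact ⟨⟨hT.2, hP hT.1 hS.2⟩, hT.1⟩
      calc m.choose j = (S.powersetCard j).card := by rw [Finset.card_powersetCard, hS.1]
        _ ≤ _ := Finset.card_le_card hsub
    · intro T hT
      simp only [mem_filter, mem_univ, true_and] at hT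
      have : ((univ.filter fun S : Finset γ => S.card = m ∧ P S).bipartiteBelow
          (fun S T => T ⊆ S) T).card ≤ ((univ \ T).powersetCard (m - j)).card := by
        apply Finset.card_le_card_of_injOn (fun S => S \ T)
        · intro S hS
          simp only [Finset.bipartiteBelow, Finset.mem_coe, mem_filter, mem_univ, true_and] at hS
          rw [Finset.mem_coe, Finset.mem_powersetCard]
          refine ⟨Finset.sdiff_subset_sdiff (Finset.subset_univ S) le_rfl, ?_⟩
          rw [Finset.card_sdiff_of_subset hS.2, hS.1.1, hT.1]
        · intro S hS S' hS' hEq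
          simp only [Finset.bipartiteBelow, coe_filter, mem_univ, true_and,
            Set.mem_setOf_eq] at hS hS'
          have : S \ T ∪ T = S' \ T ∪ T := by simp only at hEq; rw [hEq]
          rwa [Finset.sdiff_union_of_subset hS.2, Finset.sdiff_union_of_subset hS'.2] at this
      calc ((univ.filter fun S : Finset γ => S.card = m ∧ P S).bipartiteBelow
            (fun S T => T ⊆ S) T).card ≤ ((univ \ T).powersetCard (m - j)).card := this
        _ = (N - j).choose (m - j) := by
            rw [Finset.card_powersetCard, Finset.card_sdiff_of_subset (Finset.subset_univ T),
              Finset.card_univ, hT.1]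
  have hpos : 0 < m.choose j := Nat.choose_pos hj
  apply Nat.le_of_mul_le_mul_right _ hpos
  calc (univ.filter fun S : Finset γ => S.card = m ∧ P S).card * N.choose j * m.choose j
      = (univ.filter fun S : Finset γ => S.card = m ∧ P S).card * m.choose j * N.choose j := by
        ring
    _ ≤ (univ.filter fun S : Finset γ => S.card = j ∧ P S).card * (N - j).choose (m - j) *
          N.choose j := Nat.mul_le_mul_right _ key
    _ = (univ.filter fun S : Finset γ => S.card = j ∧ P S).card *
          (N.choose j * (N - j).choose (m - j)) := by ring
    _ = (univ.filter fun S : Finset γ => S.card = j ∧ P S).card *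
          (N.choose m * m.choose j) := by rw [← Nat.choose_mul hj]
    _ = (univ.filter fun S : Finset γ => S.card = j ∧ P S).card * N.choose m * m.choose j := by
        ring

lemma tuple_vs_set (m : ℕ) (P : Finset γ → Prop) [DecidablePred P]
    (hP : ∀ ⦃S T : Finset γ⦄, T ⊆ S → P S → P T) :
    (univ.filter (fun S : Finset γ => S.card = m ∧ P S)).card * (Fintype.card γ) ^ m ≤
    (univ.filter (fun f : Fin m → γ => P (image f univ))).card * (Fintype.card γ).choose m := by
  classical
  set N := Fintype.card γ with hN
  set cnt : Finset γ → ℕ :=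
    fun S => (univ.filter (fun f : Fin m → γ => image f univ = S)).card with hcnt
  have hfib : ∀ (Q : Finset γ → Prop) (_ : DecidablePred Q),
      (univ.filter (fun f : Fin m → γ => Q (image f univ))).card
        = ∑ S ∈ univ.filter Q, cnt S := by
    intro Q _
    rw [Finset.card_eq_sum_card_fiberwise
      (f := fun f : Fin m → γ => image f univ) (t := univ.filter Q)
      (fun f hf => by simpa using (Finset.mem_filter.mp hf).2)]
    refine Finset.sum_congr rfl fun S hS => ?_
    have hQS : Q S := (Finset.mem_filter.mp hS).2
    congr 1
    ext f
    simp only [mem_filter, mem_univ, true_and]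
    constructor
    · rintro ⟨-, h⟩; exact h
    · rintro h; exact ⟨h ▸ hQS, h⟩
  have hpow : N ^ m = ∑ S ∈ (univ : Finset (Finset γ)), cnt S := by
    have := hfib (fun _ => True) (fun _ => inferInstance)
    simp only [filter_true] at this
    rw [← this, Finset.card_univ, Fintype.card_fun, Fintype.card_fin, hN]
  have hzero : ∀ S : Finset γ, m < S.card → cnt S = 0 := by
    intro S hS
    rw [hcnt, Finset.card_eq_zero, Finset.filter_eq_empty_iff]
    intro f _ hf
    have : (image f univ).card ≤ m := le_trans (Finset.card_image_le) (by simp)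
    rw [hf] at this
    omega
  have hgroup : ∀ t : Finset (Finset γ), ∑ S ∈ t, cnt S
      = ∑ j ∈ Finset.range (m + 1), ∑ S ∈ t.filter (fun S => S.card = j), cnt S := by
    intro t
    have h1 : ∑ S ∈ t, cnt S = ∑ S ∈ t.filter (fun S => S.card ≤ m), cnt S := by
      refine (Finset.sum_subset (Finset.filter_subset _ _) fun S hS hS' => ?_).symm
      simp only [mem_filter, hS, true_and, not_le] at hS'
      exact hzero S hS'
    rw [h1, ← Finset.sum_fiberwise_of_maps_to (t := Finset.range (m + 1))
      (g := fun S : Finset γ => S.card)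
      (fun S hS => by
        simp only [Finset.mem_range]
        have := (Finset.mem_filter.mp hS).2; omega)]
    refine Finset.sum_congr rfl fun j hj => ?_
    have hjm : j ≤ m := by have := Finset.mem_range.mp hj; omega
    congr 1
    ext S
    simp only [mem_filter]
    constructor
    · rintro ⟨⟨hS, -⟩, hc⟩; exact ⟨hS, hc⟩
    · rintro ⟨hS, hc⟩; exact ⟨⟨hS, by omega⟩, hc⟩
  rw [hfib P inferInstance, hpow, hgroup, hgroup, Finset.mul_sum, Finset.sum_mul]
  apply Finset.sum_le_sum
  intro j hj
  have hjm : j ≤ m := by have := Finset.mem_range.mp hj; omega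
  by_cases hne : (univ.filter (fun S : Finset γ => S.card = j)) = ∅
  · have h2 : (univ.filter P).filter (fun S : Finset γ => S.card = j) = ∅ := by
      rw [Finset.eq_empty_iff_forall_notMem] at hne ⊢
      intro S hS
      exact hne S (by simp only [mem_filter, mem_univ, true_and] at hS ⊢; exact hS.2)
    rw [hne, h2]; simp
  · obtain ⟨S₀, hS₀⟩ := Finset.nonempty_iff_ne_empty.mpr hne
    have hS₀c : S₀.card = j := by simpa using (Finset.mem_filter.mp hS₀).2
    have hconst : ∀ t : Finset (Finset γ), (∀ S ∈ t, S.card = j) →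
        ∑ S ∈ t, cnt S = t.card * cnt S₀ := by
      intro t ht
      rw [Finset.sum_congr rfl (fun S hS => cnt_const m ((ht S hS).trans hS₀c.symm)),
        Finset.sum_const, smul_eq_mul]
    rw [hconst _ (fun S hS => by simpa using (Finset.mem_filter.mp hS).2),
        hconst _ (fun S hS => by simpa using (Finset.mem_filter.mp hS).2)]
    have hcard1 : (univ.filter (fun S : Finset γ => S.card = j)).card = N.choose j := by
      have : univ.filter (fun S : Finset γ => S.card = j) = Finset.powersetCard j univ := by
        ext S
        simp [Finset.mem_powersetCard, Finset.subset_univ]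
      rw [this, Finset.card_powersetCard, Finset.card_univ]
    have hcard2 : ((univ.filter P).filter (fun S : Finset γ => S.card = j))
        = univ.filter (fun S : Finset γ => S.card = j ∧ P S) := by
      ext S
      simp only [mem_filter, mem_univ, true_and]
      tauto
    rw [hcard1, hcard2]
    calc (univ.filter (fun S : Finset γ => S.card = m ∧ P S)).card * (N.choose j * cnt S₀)
        = ((univ.filter (fun S : Finset γ => S.card = m ∧ P S)).card * N.choose j) * cnt S₀ := by
          ring
      _ ≤ ((univ.filter (fun S : Finset γ => S.card = j ∧ P S)).card * N.choose m) * cnt S₀ :=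
          Nat.mul_le_mul_right _ (sat_sets_ratio P hP hjm)
      _ = (univ.filter (fun S : Finset γ => S.card = j ∧ P S)).card * cnt S₀ * N.choose m := by
          ring

end General

lemma pr_eq_filter (Ω : Type*) [Fintype Ω] (P : Ω → Prop) [DecidablePred P] :
    pr Ω P = ((univ.filter P).card : ℝ) / (Fintype.card Ω : ℝ) := by
  unfold pr
  congr 1
  norm_cast
  rw [Nat.card_eq_fintype_card, Fintype.card_subtype]

lemma card_filter_prod {X A : Type*} [Fintype X] [Fintype A] [DecidableEq A]
    (Q : X × A → Prop) [DecidablePred Q] :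
    (univ.filter Q).card = ∑ α : A, (univ.filter (fun x : X => Q (x, α))).card := by
  classical
  rw [Finset.card_eq_sum_card_fiberwise (f := Prod.snd) (t := univ) (fun _ _ => mem_univ _)]
  refine Finset.sum_congr rfl fun α _ => ?_
  apply Finset.card_bij (fun p _ => p.1)
  · intro p hp
    simp only [mem_filter, mem_univ, true_and] at hp ⊢
    obtain ⟨h1, h2⟩ := hp
    rwa [show (p.1, α) = p from Prod.ext rfl h2.symm]
  · intro p hp q hq hEq
    simp only [mem_filter, mem_univ, true_and] at hp hq
    exact Prod.ext hEq (hp.2.trans hq.2.symm)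
  · intro x hx
    simp only [mem_filter, mem_univ, true_and] at hx
    exact ⟨(x, α), by simp [hx], rfl⟩

lemma card_filter_subtype {X : Type*} [Fintype X] [DecidableEq X] (q : X → Prop)
    [DecidablePred q] (P : X → Prop) [DecidablePred P] :
    (univ.filter (fun s : {x // q x} => P s.val)).card =
      (univ.filter (fun x : X => q x ∧ P x)).card := by
  apply Finset.card_bij (fun s _ => s.val)
  · intro s hs
    simp only [mem_filter, mem_univ, true_and] at hs ⊢
    exact ⟨s.2, hs⟩
  · intro s _ t _ hEq
    exact Subtype.ext hEq
  · intro x hx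
    simp only [mem_filter, mem_univ, true_and] at hx
    exact ⟨⟨x, hx.1⟩, by simp [hx.2], rfl⟩

/-- Monotonicity of the probability that a random partial assignment `α ∼ 𝓕₁(n,2k)`
extends to satisfy a random formula:
(a) under `𝓗₂`, the probability with `m'` i.i.d. clauses is at most that with `m ≤ m'`
clauses; (b) the probability under `𝓕₂(n,m)` (uniform sets of `m` distinct clauses) is
at most that under `𝓗₂(n,m)`. -/
theorem sat_prob_monotone (n k : ℕ) (hk : 2 * k ≤ n) :
    (∀ m m' : ℕ, m ≤ m' → m' ≤ 4 * n.choose 2 →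
      pr ((Fin m' → Clause n) × PAk n (2 * k))
        (fun p => ∃ σ : Fin n → Bool,
          (∀ x b, p.2.val x = some b → σ x = b) ∧ ∀ i, clauseSat σ (p.1 i)) ≤
      pr ((Fin m → Clause n) × PAk n (2 * k))
        (fun p => ∃ σ : Fin n → Bool,
          (∀ x b, p.2.val x = some b → σ x = b) ∧ ∀ i, clauseSat σ (p.1 i))) ∧
    (∀ m : ℕ, m ≤ 4 * n.choose 2 →
      pr ({s : Finset (Clause n) // s.card = m} × PAk n (2 * k))
        (fun p => ∃ σ : Fin n → Bool,
          (∀ x b, p.2.val x = some b → σ x = b) ∧ ∀ C ∈ p.1.val, clauseSat σ C) ≤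
      pr ((Fin m → Clause n) × PAk n (2 * k))
        (fun p => ∃ σ : Fin n → Bool,
          (∀ x b, p.2.val x = some b → σ x = b) ∧ ∀ i, clauseSat σ (p.1 i))) := by
  classical
  set N := Fintype.card (Clause n) with hNdef
  set a := Fintype.card (PAk n (2 * k)) with hadef
  constructor
  · -- part (a)
    intro m m' hmm' _
    set P' : (Fin m' → Clause n) × PAk n (2 * k) → Prop := fun p => ∃ σ : Fin n → Bool,
      (∀ x b, p.2.val x = some b → σ x = b) ∧ ∀ i, clauseSat σ (p.1 i) with hP'def
    set P : (Fin m → Clause n) × PAk n (2 * k) → Prop := fun p => ∃ σ : Fin n → Bool,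
      (∀ x b, p.2.val x = some b → σ x = b) ∧ ∀ i, clauseSat σ (p.1 i) with hPdef
    rw [pr_eq_filter, pr_eq_filter]
    have hcard' : Fintype.card ((Fin m' → Clause n) × PAk n (2 * k)) = N ^ m' * a := by
      rw [Fintype.card_prod, Fintype.card_fun, Fintype.card_fin]
    have hcardm : Fintype.card ((Fin m → Clause n) × PAk n (2 * k)) = N ^ m * a := by
      rw [Fintype.card_prod, Fintype.card_fun, Fintype.card_fin]
    rw [hcard', hcardm]
    by_cases hz : N ^ m' * a = 0
    · rw [hz]
      simp only [Nat.cast_zero, div_zero]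
      exact div_nonneg (Nat.cast_nonneg _) (Nat.cast_nonneg _)
    · have h1 : 0 < N ^ m' * a := Nat.pos_of_ne_zero hz
      have ha : 0 < a := Nat.pos_of_ne_zero (fun h => by simp [h] at h1)
      have hNm : 0 < N ^ m := by
        rcases Nat.eq_zero_or_pos N with h0 | h0
        · have hm0 : m' = 0 := by
            by_contra hne
            rw [h0, zero_pow hne] at h1
            simp at h1
          have : m = 0 := by omega
          simp [this]
        · exact pow_pos h0 m
      -- the key counting inequality
      have key : (univ.filter P').card ≤ (univ.filter P).card * N ^ (m' - m) := by
        have hprod : ((univ.filter P) ×ˢ (univ : Finset (Fin (m' - m) → Clause n))).card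
            = (univ.filter P).card * N ^ (m' - m) := by
          rw [Finset.card_product, Finset.card_univ, Fintype.card_fun, Fintype.card_fin]
        rw [← hprod]
        apply Finset.card_le_card_of_injOn
          (fun p => ((fun i => p.1 (Fin.castLE hmm' i), p.2),
            fun i : Fin (m' - m) => p.1 ⟨m + i.val, by omega⟩))
        · intro p hp
          simp only [Finset.mem_coe, mem_filter, mem_univ, true_and, hP'def] at hp
          rw [Finset.mem_coe, Finset.mem_product]
          refine ⟨?_, mem_univ _⟩
          simp only [mem_filter, mem_univ, true_and, hPdef]
          obtain ⟨σ, hext, hsat⟩ := hp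
          exact ⟨σ, hext, fun i => hsat _⟩
        · intro p _ q _ hEq
          simp only [Prod.mk.injEq] at hEq
          obtain ⟨⟨h1', h2'⟩, h3'⟩ := hEq
          refine Prod.ext ?_ h2'
          funext i
          by_cases hi : i.val < m
          · have hfun := congrFun h1' ⟨i.val, hi⟩
            have hcast : Fin.castLE hmm' ⟨i.val, hi⟩ = i := Fin.ext rfl
            rwa [hcast] at hfun
          · have hj : i.val - m < m' - m := by
              have := i.isLt; omega
            have hfun := congrFun h3' ⟨i.val - m, hj⟩
            have hcast : (⟨m + (i.val - m), by omega⟩ : Fin m') = i := Fin.ext (by simp; omega)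
            simp only at hfun
            rwa [hcast] at hfun
      rw [div_le_div_iff₀ (by exact_mod_cast h1) (by exact_mod_cast Nat.mul_pos hNm ha)]
      have hnat : (univ.filter P').card * (N ^ m * a) ≤ (univ.filter P).card * (N ^ m' * a) :=
        calc (univ.filter P').card * (N ^ m * a)
            ≤ ((univ.filter P).card * N ^ (m' - m)) * (N ^ m * a) :=
              Nat.mul_le_mul_right _ key
          _ = (univ.filter P).card * ((N ^ (m' - m) * N ^ m) * a) := by ring
          _ = (univ.filter P).card * (N ^ m' * a) := by
              have hmm : m' - m + m = m' := by omega
              rw [← pow_add, hmm]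
      exact_mod_cast hnat
  · -- part (b)
    intro m _
    set Pset : {s : Finset (Clause n) // s.card = m} × PAk n (2 * k) → Prop :=
      fun p => ∃ σ : Fin n → Bool,
        (∀ x b, p.2.val x = some b → σ x = b) ∧ ∀ C ∈ p.1.val, clauseSat σ C with hPsetdef
    set Ptup : (Fin m → Clause n) × PAk n (2 * k) → Prop := fun p => ∃ σ : Fin n → Bool,
      (∀ x b, p.2.val x = some b → σ x = b) ∧ ∀ i, clauseSat σ (p.1 i) with hPtupdef
    rw [pr_eq_filter, pr_eq_filter]
    have hcards : Fintype.card ({s : Finset (Clause n) // s.card = m} × PAk n (2 * k))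
        = N.choose m * a := by
      rw [Fintype.card_prod, Fintype.card_finset_len]
    have hcardt : Fintype.card ((Fin m → Clause n) × PAk n (2 * k)) = N ^ m * a := by
      rw [Fintype.card_prod, Fintype.card_fun, Fintype.card_fin]
    rw [hcards, hcardt]
    -- key counting inequality
    have key : (univ.filter Pset).card * N ^ m ≤ (univ.filter Ptup).card * N.choose m := by
      rw [card_filter_prod Pset, card_filter_prod Ptup, Finset.sum_mul, Finset.sum_mul]
      apply Finset.sum_le_sum
      intro α _
      set P : Finset (Clause n) → Prop := fun S => ∃ σ : Fin n → Bool,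
        (∀ x b, α.val x = some b → σ x = b) ∧ ∀ c ∈ S, clauseSat σ c with hPdef
      have hdc : ∀ ⦃S T : Finset (Clause n)⦄, T ⊆ S → P S → P T := by
        rintro S T hTS ⟨σ, h1, h2⟩
        exact ⟨σ, h1, fun c hc => h2 c (hTS hc)⟩
      have h1 : (univ.filter
            (fun s : {s : Finset (Clause n) // s.card = m} => Pset (s, α))).card
          = (univ.filter (fun S : Finset (Clause n) => S.card = m ∧ P S)).card :=
        card_filter_subtype (fun s : Finset (Clause n) => s.card = m) P
      have h2 : (univ.filter (fun f : Fin m → Clause n => Ptup (f, α))).card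
          = (univ.filter (fun f : Fin m → Clause n => P (image f univ))).card := by
        refine congrArg Finset.card (Finset.filter_congr ?_)
        intro f _
        constructor
        · rintro ⟨σ, hext, hsat⟩
          refine ⟨σ, hext, fun c hc => ?_⟩
          obtain ⟨i, -, rfl⟩ := Finset.mem_image.mp hc
          exact hsat i
        · rintro ⟨σ, hext, hsat⟩
          exact ⟨σ, hext, fun i => hsat _ (Finset.mem_image_of_mem f (mem_univ i))⟩
      rw [h1, h2]
      exact tuple_vs_set m P hdc
    by_cases hz : N.choose m * a = 0
    · rw [hz]
      simp only [Nat.cast_zero, div_zero]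
      exact div_nonneg (Nat.cast_nonneg _) (Nat.cast_nonneg _)
    · have h1 : 0 < N.choose m * a := Nat.pos_of_ne_zero hz
      have ha : 0 < a := Nat.pos_of_ne_zero (fun h => by simp [h] at h1)
      have hch : 0 < N.choose m := Nat.pos_of_ne_zero (fun h => by simp [h] at h1)
      have hmN : m ≤ N := by
        by_contra h
        rw [Nat.choose_eq_zero_of_lt (by omega)] at hch
        omega
      have hNm : 0 < N ^ m := by
        rcases Nat.eq_zero_or_pos N with h0 | h0
        · have : m = 0 := by omega
          simp [this]
        · exact pow_pos h0 m
      rw [div_le_div_iff₀ (by exact_mod_cast h1) (by exact_mod_cast Nat.mul_pos hNm ha)]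
      have hnat : (univ.filter Pset).card * (N ^ m * a)
          ≤ (univ.filter Ptup).card * (N.choose m * a) :=
        calc (univ.filter Pset).card * (N ^ m * a)
            = ((univ.filter Pset).card * N ^ m) * a := by ring
          _ ≤ ((univ.filter Ptup).card * N.choose m) * a := Nat.mul_le_mul_right _ key
          _ = (univ.filter Ptup).card * (N.choose m * a) := by ring
      exact_mod_cast hnat
end
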